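/- arXiv:2108.02775 — 4 statements merged into one kernel-verified Lean document; each statement's English description precedes it below -/
import Mathlib

section
/- In any finite binary tree labeled with 'finalized'/'unfinalized' such that every finalized node has at least one subtree entirely finalized, if the number of type-0 unfinalized nodes is at most a and the number of type-1 unfinalized nodes is at most b, then the total number of unfinalized nodes in the tree is at most 2a + b. -/
/-- A finite binary tree with node labels of type `α`. -/
inductive BTree (α : Type) : Type where
  | leaf : BTree α
  | node : BTree α → α → BTree α → BTree α

namespace BTree

/-- Node label `true` means "finalized", `false` means "unfinalized".
`hasUnfin t` says the tree `t` contains at least one unfinalized node. -/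
def hasUnfin : BTree Bool → Bool
  | leaf => false
  | node l b r => !b || hasUnfin l || hasUnfin r

/-- The labeling invariant: every finalized node has at least one of its two
subtrees consisting entirely of finalized nodes. -/
def good : BTree Bool → Prop
  | leaf => True
  | node l b r =>
      (b = true → hasUnfin l = false ∨ hasUnfin r = false) ∧ good l ∧ good r

/-- Number of type-0 nodes: unfinalized nodes neither of whose subtrees
contains an unfinalized node. -/
def type0Count : BTree Bool → ℕ
  | leaf => 0
  | node l b r =>
      type0Count l + type0Count r +
        (if b = false ∧ hasUnfin l = false ∧ hasUnfin r = false then 1 else 0)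

/-- Number of type-1 nodes: unfinalized nodes exactly one of whose subtrees
contains an unfinalized node. -/
def type1Count : BTree Bool → ℕ
  | leaf => 0
  | node l b r =>
      type1Count l + type1Count r +
        (if b = false ∧ hasUnfin l ≠ hasUnfin r then 1 else 0)

/-- Total number of unfinalized nodes. -/
def unfinCount : BTree Bool → ℕ
  | leaf => 0
  | node l b r => unfinCount l + unfinCount r + (if b = false then 1 else 0)

end BTree

/-
Call an unfinalized node type 2 when both of its subtrees contain an unfinalized node. The
unfinalized nodes are exactly the nodes of types 0, 1 and 2, and type-2 nodes are outnumbered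
by type-0 nodes: every type-2 node joins two nonempty families of unfinalized nodes, each of
which, by induction, has strictly more type-0 than type-2 nodes. Hence the total is at most
`2 · type0 + type1`.
-/

namespace BTree

def type2Count : BTree Bool → ℕ
  | leaf => 0
  | node l b r =>
      type2Count l + type2Count r +
        (if b = false ∧ hasUnfin l = true ∧ hasUnfin r = true then 1 else 0)

theorem unfinCount_eq_type0Count_add_type1Count_add_type2Count (t : BTree Bool) :
    unfinCount t = type0Count t + type1Count t + type2Count t := by
  induction t with
  | leaf => rfl
  | node l b r ihl ihr =>
    simp only [unfinCount, type0Count, type1Count, type2Count, ihl, ihr]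
    cases b <;> cases hasUnfin l <;> cases hasUnfin r <;> simp <;> omega

theorem type2Count_add_toNat_hasUnfin_le_type0Count (t : BTree Bool) :
    type2Count t + (hasUnfin t).toNat ≤ type0Count t := by
  induction t with
  | leaf => simp [type2Count, type0Count, hasUnfin]
  | node l b r ihl ihr =>
    simp only [type2Count, type0Count, hasUnfin]
    cases b <;> cases hl : hasUnfin l <;> cases hr : hasUnfin r <;>
      simp [hl, hr] at ihl ihr ⊢ <;> omega

end BTree

open BTree in
theorem unfinCount_le_general (t : BTree Bool) (a b : ℕ)
    (h0 : type0Count t ≤ a) (h1 : type1Count t ≤ b) :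
    unfinCount t ≤ 2 * a + b := by
  have hsplit := unfinCount_eq_type0Count_add_type1Count_add_type2Count t
  have htype2 : type2Count t ≤ type0Count t :=
    (Nat.le_add_right _ _).trans (type2Count_add_toNat_hasUnfin_le_type0Count t)
  omega

open BTree in
/-- If every finalized node has a fully finalized subtree, and the number of
type-0 unfinalized nodes is at most `a` and the number of type-1 unfinalized
nodes is at most `b`, then the total number of unfinalized nodes is at most
`2 * a + b`. -/
theorem unfinCount_le (t : BTree Bool) (a b : ℕ) (hgood : good t)
    (h0 : type0Count t ≤ a) (h1 : type1Count t ≤ b) :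
    unfinCount t ≤ 2 * a + b :=
  unfinCount_le_general t a b h0 h1
end

section
/- In a finite binary tree, any two elements that are consecutive in the in-order traversal are comparable in the ancestor-descendant relation: one of them is an ancestor of the other. -/
namespace BTree

variable {α : Type}

/-- In-order traversal: left subtree, root, right subtree. -/
def inorder : BTree α → List α
  | leaf => []
  | node l a r => inorder l ++ a :: inorder r

/-- `IsSubtree s t`: `s` is a subtree of `t` (possibly `t` itself). -/
inductive IsSubtree : BTree α → BTree α → Prop
  | refl (t : BTree α) : IsSubtree t t
  | left {s l r : BTree α} {b : α} : IsSubtree s l → IsSubtree s (node l b r)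
  | right {s l r : BTree α} {b : α} : IsSubtree s r → IsSubtree s (node l b r)

/-- `Ancestor t u v`: in the tree `t` (whose node values are assumed distinct),
the node with value `v` lies in the subtree rooted at the node with value `u`
(every node is an ancestor of itself). -/
def Ancestor (t : BTree α) (u v : α) : Prop :=
  ∃ s, IsSubtree s t ∧ (∃ l r, s = node l u r) ∧ v ∈ inorder s

end BTree

namespace BTree

variable {α : Type}

theorem IsSubtree.trans {s t u : BTree α} (hst : IsSubtree s t) (htu : IsSubtree t u) :
    IsSubtree s u := by
  induction htu with
  | refl => exact hst
  | left _ ih => exact .left ih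
  | right _ ih => exact .right ih

theorem Ancestor.mono {s t : BTree α} {u v : α} (hst : IsSubtree s t) (h : Ancestor s u v) :
    Ancestor t u v :=
  let ⟨w, hws, hroot, hmem⟩ := h
  ⟨w, hws.trans hst, hroot, hmem⟩

theorem ancestor_root {l r : BTree α} {a x : α} (hx : x ∈ inorder (node l a r)) :
    Ancestor (node l a r) a x :=
  ⟨node l a r, .refl _, ⟨l, r, rfl⟩, hx⟩

theorem symmGen_ancestor_mono {s t : BTree α} {u v : α} (hst : IsSubtree s t)
    (h : Relation.SymmGen (Ancestor s) u v) : Relation.SymmGen (Ancestor t) u v :=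
  h.imp (Ancestor.mono hst) (Ancestor.mono hst)

/-- Consecutive entries of `inorder (node l a r)` either lie in the same subtree, or one of them
is the root `a`, which is an ancestor of everything. -/
theorem isChain_symmGen_ancestor_inorder (t : BTree α) :
    (inorder t).IsChain (Relation.SymmGen (Ancestor t)) := by
  induction t with
  | leaf => exact .nil
  | node l a r ihl ihr =>
    have mem_of_left {x : α} (hx : x ∈ inorder l) : x ∈ inorder (node l a r) :=
      List.mem_append_left _ hx
    have mem_of_right {x : α} (hx : x ∈ inorder r) : x ∈ inorder (node l a r) :=
      List.mem_append_right _ (List.mem_cons_of_mem _ hx)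
    rw [inorder, List.isChain_append, List.isChain_cons]
    refine ⟨ihl.imp fun _ _ => symmGen_ancestor_mono (.left (.refl l)),
      ⟨fun y hy => .of_rel (ancestor_root (mem_of_right (List.mem_of_mem_head? hy))),
        ihr.imp fun _ _ => symmGen_ancestor_mono (.right (.refl r))⟩,
      fun x hx y hy => ?_⟩
    obtain rfl : y = a := by simpa using hy.symm
    exact .of_rel_symm (ancestor_root (mem_of_left (List.mem_of_mem_getLast? hx)))

end BTree

open BTree in
/-- Any two elements that are consecutive in the in-order traversal of a finite
binary tree (with distinct node values) are comparable in the
ancestor-descendant relation: one is a proper ancestor of the other. -/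
theorem inorder_consecutive_ancestor {α : Type} (t : BTree α)
    (hnd : (inorder t).Nodup) (i : ℕ) (h : i + 1 < (inorder t).length)
    (u v : α)
    (hu : (inorder t).get ⟨i, Nat.lt_of_succ_lt h⟩ = u)
    (hv : (inorder t).get ⟨i + 1, h⟩ = v) :
    (Ancestor t u v ∧ u ≠ v) ∨ (Ancestor t v u ∧ u ≠ v) := by
  subst hu hv
  simp only [List.get_eq_getElem]
  have hne : (inorder t)[i] ≠ (inorder t)[i + 1] := fun heq => by
    simpa using hnd.getElem_inj_iff.mp heq
  rcases (isChain_symmGen_ancestor_inorder t).getElem i h with hanc | hanc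
  exacts [.inl ⟨hanc, hne⟩, .inr ⟨hanc, hne⟩]
end

section
/- In the binary tree built recursively from a sequence with distinct priorities by taking the minimum-priority element as the root, a node u is a proper ancestor of a node v if and only if p(u) < p(v) and p(u) is less than the priority of every element strictly between u and v in the sequence. -/
namespace BTree

variable {α : Type}

/-- `Built p s t` holds iff `t` is the binary tree recursively constructed from
the sequence `s` by choosing the (unique) minimum-priority element as the root
and building the left and right subtrees from the subsequences to its left and
right. -/
inductive Built (p : α → ℕ) : List α → BTree α → Prop
  | nil : Built p [] BTree.leaf
  | node {l r : List α} {tl tr : BTree α} {a : α} :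
      Built p l tl → Built p r tr → (∀ x ∈ l ++ r, p a < p x) →
      Built p (l ++ a :: r) (BTree.node tl a tr)

end BTree

namespace List

variable {α : Type*}

def ForallBetween (P : α → Prop) (s : List α) (i j : ℕ) : Prop :=
  ∀ k (hk : k < s.length), min i j < k → k < max i j → P s[k]

theorem forallBetween_append_left {P : α → Prop} {l m : List α} {i j : ℕ}
    (h : max i j ≤ l.length) : (l ++ m).ForallBetween P i j ↔ l.ForallBetween P i j := by
  refine ⟨fun H k hk hik hkj => ?_, fun H k hk hik hkj => ?_⟩
  · have := H k (by simp; omega) hik hkj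
    rwa [getElem_append_left hk] at this
  · rw [getElem_append_left (by omega)]
    exact H k (by omega) hik hkj

theorem forallBetween_append_right {P : α → Prop} {l m : List α} {i j : ℕ} :
    (l ++ m).ForallBetween P (l.length + i) (l.length + j) ↔ m.ForallBetween P i j := by
  refine ⟨fun H k hk hik hkj => ?_, fun H k hk hik hkj => ?_⟩
  · have := H (l.length + k) (by simp; omega) (by omega) (by omega)
    rwa [getElem_append_right (by omega), getElem_congr_idx (Nat.add_sub_cancel_left ..)] at this
  · rw [getElem_append_right (by omega)]
    exact H _ _ (by omega) (by omega)

theorem forallBetween_cons {P : α → Prop} {a : α} {m : List α} {i j : ℕ} :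
    (a :: m).ForallBetween P (i + 1) (j + 1) ↔ m.ForallBetween P i j := by
  simpa [Nat.add_comm] using forallBetween_append_right (P := P) (l := [a]) (m := m) (i := i) (j := j)

theorem Nodup.getElem_mem_take_iff {s : List α} (h : s.Nodup) {i k : ℕ} (hi : i < s.length) :
    s[i] ∈ s.take k ↔ i < k := by
  rw [mem_take_iff_getElem]
  refine ⟨fun ⟨j, hj, e⟩ => ?_, fun hik => ⟨i, by omega, rfl⟩⟩
  rw [h.getElem_inj_iff] at e
  omega

theorem Nodup.getElem_mem_drop_iff {s : List α} (h : s.Nodup) {i k : ℕ} (hi : i < s.length) :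
    s[i] ∈ s.drop k ↔ k ≤ i := by
  rw [mem_drop_iff_getElem]
  refine ⟨fun ⟨j, hj, e⟩ => ?_, fun hki => ⟨i - k, by omega, by simp only [Nat.add_sub_cancel' hki]⟩⟩
  rw [h.getElem_inj_iff] at e
  omega

section AppendCons

variable {l r : List α} {a : α} {k : ℕ}

theorem Nodup.getElem_append_cons_mem_left_iff (h : (l ++ a :: r).Nodup)
    (hk : k < (l ++ a :: r).length) : (l ++ a :: r)[k] ∈ l ↔ k < l.length := by
  simpa using h.getElem_mem_take_iff hk (k := l.length)

theorem Nodup.getElem_append_cons_mem_right_iff (h : (l ++ a :: r).Nodup)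
    (hk : k < (l ++ a :: r).length) : (l ++ a :: r)[k] ∈ r ↔ l.length < k := by
  simpa using h.getElem_mem_drop_iff hk (k := l.length + 1)

theorem Nodup.getElem_append_cons_eq_iff (h : (l ++ a :: r).Nodup)
    (hk : k < (l ++ a :: r).length) : (l ++ a :: r)[k] = a ↔ k = l.length := by
  rw [← h.getElem_inj_iff (hj := by simp), getElem_of_append rfl rfl]

theorem Nodup.getElem_append_cons_mem_of_ne (h : (l ++ a :: r).Nodup)
    (hk : k < (l ++ a :: r).length) (hkn : k ≠ l.length) : (l ++ a :: r)[k] ∈ l ++ r := by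
  rcases lt_or_gt_of_ne hkn with hlt | hgt
  · exact mem_append_left _ ((h.getElem_append_cons_mem_left_iff hk).2 hlt)
  · exact mem_append_right _ ((h.getElem_append_cons_mem_right_iff hk).2 hgt)

end AppendCons

end List

namespace BTree

variable {α : Type}

theorem IsSubtree.inorder_sublist {s t : BTree α} (h : IsSubtree s t) :
    s.inorder.Sublist t.inorder := by
  induction h with
  | refl => exact .refl _
  | left _ ih => exact ih.trans (by simp [inorder])
  | right _ ih => exact ih.trans (by simp [inorder])

theorem Ancestor.left_mem {t : BTree α} {u v : α} (h : Ancestor t u v) : u ∈ t.inorder := by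
  obtain ⟨s, hs, ⟨l, r, rfl⟩, -⟩ := h
  exact hs.inorder_sublist.mem (by simp [inorder])

theorem Ancestor.right_mem {t : BTree α} {u v : α} (h : Ancestor t u v) : v ∈ t.inorder :=
  let ⟨_, hs, _, hv⟩ := h
  hs.inorder_sublist.mem hv

theorem ancestor_node_iff {tl tr : BTree α} {a u v : α} :
    Ancestor (node tl a tr) u v ↔
      (u = a ∧ v ∈ (node tl a tr).inorder) ∨ Ancestor tl u v ∨ Ancestor tr u v := by
  constructor
  · rintro ⟨s, hs, ⟨l, r, rfl⟩, hv⟩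
    cases hs with
    | refl => exact .inl ⟨rfl, hv⟩
    | left h => exact .inr (.inl ⟨_, h, ⟨l, r, rfl⟩, hv⟩)
    | right h => exact .inr (.inr ⟨_, h, ⟨l, r, rfl⟩, hv⟩)
  · rintro (⟨rfl, hv⟩ | ⟨s, hs, hu, hv⟩ | ⟨s, hs, hu, hv⟩)
    · exact ⟨_, .refl _, ⟨tl, tr, rfl⟩, hv⟩
    · exact ⟨s, .left hs, hu, hv⟩
    · exact ⟨s, .right hs, hu, hv⟩

theorem ancestor_node_root_iff {tl tr : BTree α} {a v : α} :
    Ancestor (node tl a tr) a v ↔ v ∈ (node tl a tr).inorder :=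
  ⟨Ancestor.right_mem, fun hv => ⟨_, .refl _, ⟨tl, tr, rfl⟩, hv⟩⟩

theorem ancestor_node_iff_of_ne {tl tr : BTree α} {a u v : α} (hua : u ≠ a) :
    Ancestor (node tl a tr) u v ↔ Ancestor tl u v ∨ Ancestor tr u v := by
  rw [ancestor_node_iff, or_iff_right (hua ·.1)]

theorem Built.inorder_eq {p : α → ℕ} {s : List α} {t : BTree α} (h : Built p s t) :
    t.inorder = s := by
  induction h with
  | nil => rfl
  | node _ _ _ ihl ihr => simp [inorder, ihl, ihr]

section BuiltNode

variable {p : α → ℕ} {l r : List α} {tl tr : BTree α} {a : α}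

theorem Built.ancestor_root_iff (hbl : Built p l tl) (hbr : Built p r tr)
    (hmin : ∀ x ∈ l ++ r, p a < p x) (hs : (l ++ a :: r).Nodup) {j : ℕ}
    (hj : j < (l ++ a :: r).length) :
    Ancestor (.node tl a tr) a (l ++ a :: r)[j] ∧ a ≠ (l ++ a :: r)[j] ↔
      p a < p (l ++ a :: r)[j] ∧
        (l ++ a :: r).ForallBetween (fun x => p a < p x) l.length j := by
  have hlt : ∀ {k} (hk : k < (l ++ a :: r).length), k ≠ l.length → p a < p (l ++ a :: r)[k] :=
    fun hk hkn => hmin _ (hs.getElem_append_cons_mem_of_ne hk hkn)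
  rw [ancestor_node_root_iff, ne_comm, Ne, hs.getElem_append_cons_eq_iff hj]
  refine ⟨fun ⟨_, hjn⟩ => ⟨hlt hj hjn, fun k hk h1 h2 => hlt hk (by omega)⟩,
    fun ⟨hpj, _⟩ => ⟨?_, ?_⟩⟩
  · simp [inorder, hbl.inorder_eq, hbr.inorder_eq]
  · rintro rfl
    simp at hpj

theorem Built.not_ancestor_of_separated (hbl : Built p l tl) (hbr : Built p r tr)
    (hs : (l ++ a :: r).Nodup) {i j : ℕ} (hi : i < (l ++ a :: r).length)
    (hj : j < (l ++ a :: r).length) (hin : i ≠ l.length)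
    (hsep : ¬ (i < l.length ∧ j < l.length) ∧ ¬ (l.length < i ∧ l.length < j)) :
    ¬ Ancestor (.node tl a tr) (l ++ a :: r)[i] (l ++ a :: r)[j] := by
  rw [ancestor_node_iff_of_ne (mt (hs.getElem_append_cons_eq_iff hi).1 hin)]
  rintro (h | h)
  · have hu := h.left_mem
    have hv := h.right_mem
    rw [hbl.inorder_eq, hs.getElem_append_cons_mem_left_iff] at hu hv
    omega
  · have hu := h.left_mem
    have hv := h.right_mem
    rw [hbr.inorder_eq, hs.getElem_append_cons_mem_right_iff] at hu hv
    omega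

theorem not_lt_and_forallBetween_of_separated (hmin : ∀ x ∈ l ++ r, p a < p x)
    (hs : (l ++ a :: r).Nodup) {i j : ℕ} (hi : i < (l ++ a :: r).length)
    (hj : j < (l ++ a :: r).length) (hin : i ≠ l.length)
    (hsep : ¬ (i < l.length ∧ j < l.length) ∧ ¬ (l.length < i ∧ l.length < j)) :
    ¬ (p (l ++ a :: r)[i] < p (l ++ a :: r)[j] ∧
      (l ++ a :: r).ForallBetween (fun x => p (l ++ a :: r)[i] < p x) i j) := by
  rintro ⟨hij, H⟩
  have hroot : (l ++ a :: r)[l.length] = a := by simp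
  have hai := hmin _ (hs.getElem_append_cons_mem_of_ne hi hin)
  by_cases hjn : j = l.length
  · subst hjn
    rw [hroot] at hij
    exact hai.asymm hij
  · have hia := H l.length (by simp) (by omega) (by omega)
    rw [hroot] at hia
    exact hai.asymm hia

end BuiltNode

theorem Built.ancestor_iff {p : α → ℕ} {s : List α} {t : BTree α} (hb : Built p s t)
    (hs : s.Nodup) {i j : ℕ} (hi : i < s.length) (hj : j < s.length) :
    Ancestor t s[i] s[j] ∧ s[i] ≠ s[j] ↔
      p s[i] < p s[j] ∧ s.ForallBetween (fun x => p s[i] < p x) i j := by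
  induction hb generalizing i j with
  | nil => simp at hi
  | @node l r tl tr a hbl hbr hmin ihl ihr =>
    have hl : l.Nodup := hs.of_append_left
    have hr : r.Nodup := hs.of_append_right.of_cons
    by_cases hin : i = l.length
    · subst hin
      simpa using hbl.ancestor_root_iff hbr hmin hs hj
    have hu := mt (hs.getElem_append_cons_eq_iff hi).1 hin
    by_cases hleft : i < l.length ∧ j < l.length
    · rw [ancestor_node_iff_of_ne hu, or_iff_left (fun h => ?_)]
      · simp only [List.getElem_append_left hleft.1, List.getElem_append_left hleft.2]
        rw [ihl hl hleft.1 hleft.2, List.forallBetween_append_left (by omega)]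
      · have := h.left_mem
        rw [hbr.inorder_eq, hs.getElem_append_cons_mem_right_iff] at this
        omega
    by_cases hright : l.length < i ∧ l.length < j
    · obtain ⟨i, rfl⟩ : ∃ i', i = l.length + (i' + 1) := ⟨i - l.length - 1, by omega⟩
      obtain ⟨j, rfl⟩ : ∃ j', j = l.length + (j' + 1) := ⟨j - l.length - 1, by omega⟩
      rw [ancestor_node_iff_of_ne hu, or_iff_right (fun h => ?_), List.forallBetween_append_right,
        List.forallBetween_cons]
      · simp only [le_add_iff_nonneg_right, zero_le, List.getElem_append_right,
          add_tsub_cancel_left, List.getElem_cons_succ]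
        exact ihr hr _ _
      · have := h.left_mem
        rw [hbl.inorder_eq, hs.getElem_append_cons_mem_left_iff] at this
        omega
    exact iff_of_false (fun h => hbl.not_ancestor_of_separated hbr hs hi hj hin ⟨hleft, hright⟩ h.1)
      (not_lt_and_forallBetween_of_separated hmin hs hi hj hin ⟨hleft, hright⟩)

end BTree

open BTree in
theorem properAncestor_iff_general {α : Type} (p : α → ℕ) (s : List α) (t : BTree α)
    (hdist : s.Pairwise fun x y => p x ≠ p y)
    (hb : Built p s t)
    (i j : Fin s.length)
    (u v : α) (hu : s.get i = u) (hv : s.get j = v) :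
    (Ancestor t u v ∧ u ≠ v) ↔
      (p u < p v ∧ ∀ k : Fin s.length,
        min i.val j.val < k.val → k.val < max i.val j.val → p u < p (s.get k)) := by
  subst hu hv
  have hs : s.Nodup := hdist.imp (fun hp he => hp (congrArg p he))
  rw [List.get_eq_getElem, List.get_eq_getElem, hb.ancestor_iff hs i.isLt j.isLt]
  simp only [List.ForallBetween, Fin.forall_iff, List.get_eq_getElem]

open BTree in
/-- In the tree built recursively from a sequence with distinct priorities by
taking the minimum-priority element as root, `u` is a proper ancestor of `v`
iff `p u < p v` and `p u` is less than the priority of every element strictly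
between `u` and `v` in the sequence. -/
theorem properAncestor_iff {α : Type} (p : α → ℕ) (s : List α) (t : BTree α)
    (hdist : s.Pairwise fun x y => p x ≠ p y)
    (hb : Built p s t)
    (i j : Fin s.length) (hij : i ≠ j)
    (u v : α) (hu : s.get i = u) (hv : s.get j = v) :
    (Ancestor t u v ∧ u ≠ v) ↔
      (p u < p v ∧ ∀ k : Fin s.length,
        min i.val j.val < k.val → k.val < max i.val j.val → p u < p (s.get k)) :=
  properAncestor_iff_general p s t hdist hb i j u v hu hv
end

section
/- Under the doubly-linked-list invariant in which between any two consecutive unfinalized nodes there is at most one finalized node pointed into the list (and finalized nodes point only to unfinalized nodes or ⊥), if the last unfinalized node u_n is reachable from the head and right(u_i) ∈ {u_{i+1}, y} with left(y)=u_i, right(y)=u_{i+1} for some finalized y, then every unfinalized node u_i is reachable from the head by following left pointers from u_n and the chain structure; in particular all unfinalized nodes are lr-reachable. -/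
/-- One pointer-following step: `y` is the `right` or `left` pointer of `x`. -/
def Step {α : Type} (left right : α → Option α) (x y : α) : Prop :=
  right x = some y ∨ left x = some y

/-- lr-reachability: reachable by following a finite sequence of
`left`/`right` pointers. -/
def Reach {α : Type} (left right : α → Option α) : α → α → Prop :=
  Relation.ReflTransGen (Step left right)

/-! Each unfinalized node reaches its predecessor through at most two `left` pointers, so
reachability propagates from `u (n - 1)` down to every `u i`. -/

theorem Relation.reflTransGen_apply_of_pred_of_ge {β : Type*} {r : β → β → Prop} {u : ℕ → β}
    {i m : ℕ} (hstep : ∀ k, k < m → Relation.ReflTransGen r (u (k + 1)) (u k))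
    (him : i ≤ m) : Relation.ReflTransGen r (u m) (u i) := by
  induction m, him using Nat.le_induction with
  | base => exact .refl
  | succ m _ ih =>
    exact (hstep m m.lt_succ_self).trans (ih fun k hk => hstep k (by omega))

section Reach

variable {α : Type} {left right : α → Option α}

theorem Reach.of_left_eq {x y : α} (h : left x = some y) : Reach left right x y :=
  .single (Or.inr h)

theorem Reach.of_left_eq_or_left_left_eq {x y : α}
    (h : left x = some y ∨ ∃ z : α, left x = some z ∧ left z = some y) :
    Reach left right x y := by
  obtain h | ⟨z, hxz, hzy⟩ := h
  · exact .of_left_eq h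
  · exact (Reach.of_left_eq hxz).trans (Reach.of_left_eq hzy)

end Reach

theorem all_unfinalized_lr_reachable_general {α : Type}
    (left right : α → Option α) (head : α) (n : ℕ) (u : ℕ → α)
    (hlast : Reach left right head (u (n - 1)))
    (hinv : ∀ i : ℕ, i + 1 < n →
      left (u (i + 1)) = some (u i) ∨
      ∃ y : α, left (u (i + 1)) = some y ∧ left y = some (u i)) :
    ∀ i : ℕ, i < n → Reach left right head (u i) := fun i hi =>
  hlast.trans <| Relation.reflTransGen_apply_of_pred_of_ge
    (fun k hk => Reach.of_left_eq_or_left_left_eq (hinv k (by omega))) (by omega)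

/-- Let `u 0 <_c u 1 <_c ⋯ <_c u (n-1)` be the unfinalized nodes of the list.
Assume the doubly-linked-list invariant: for each `i`, either
`left (u (i+1)) = u i` directly (cases (b) and (c) of the invariant, where
`u i ↔ u (i+1)` or `u i ← y → u (i+1)` with `u i ← u (i+1)` for a finalized
`y`), or there is a (finalized) node `y` with `left (u (i+1)) = y` and
`left y = u i` (case (a), `u i ↔ y ↔ u (i+1)`).  If the last unfinalized node
`u (n-1)` is reachable from the head, then every unfinalized node `u i` is
lr-reachable from the head. -/
theorem all_unfinalized_lr_reachable {α : Type}
    (left right : α → Option α) (head : α) (n : ℕ) (hn : 0 < n) (u : ℕ → α)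
    (hlast : Reach left right head (u (n - 1)))
    (hinv : ∀ i : ℕ, i + 1 < n →
      left (u (i + 1)) = some (u i) ∨
      ∃ y : α, left (u (i + 1)) = some y ∧ left y = some (u i)) :
    ∀ i : ℕ, i < n → Reach left right head (u i) :=
  all_unfinalized_lr_reachable_general left right head n u hlast hinv
end
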